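/- arXiv:1706.06820 — 11 statements merged into one kernel-verified Lean document; each statement's English description precedes it below -/
import Mathlib

section
/- For any finite simple graph G on n vertices with minimum degree δ, the irregular independence number α_ir(G) satisfies α_ir(G) ≤ ⌊(n - δ + 1)/2⌋. -/
open Finset

variable {V : Type*}

/-- Degree of a vertex. -/
noncomputable def deg [Fintype V] (G : SimpleGraph V) (v : V) : ℕ :=
  Nat.card {w | G.Adj v w}

/-- An irregular independent set: independent, with pairwise distinct degrees. -/
def IsIrrIndep [Fintype V] (G : SimpleGraph V) (A : Finset V) : Prop :=
  (∀ u ∈ A, ∀ v ∈ A, ¬ G.Adj u v) ∧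
  (∀ u ∈ A, ∀ v ∈ A, u ≠ v → deg G u ≠ deg G v)

/-- The irregular independence number. -/
noncomputable def alphaIr [Fintype V] (G : SimpleGraph V) : ℕ :=
  sSup {k | ∃ A : Finset V, IsIrrIndep G A ∧ A.card = k}

/-- A regular independent set: independent, all vertices of equal degree. -/
def IsRegIndep [Fintype V] (G : SimpleGraph V) (A : Finset V) : Prop :=
  (∀ u ∈ A, ∀ v ∈ A, ¬ G.Adj u v) ∧
  (∀ u ∈ A, ∀ v ∈ A, deg G u = deg G v)

/-- The regular independence number. -/
noncomputable def alphaReg [Fintype V] (G : SimpleGraph V) : ℕ :=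
  sSup {k | ∃ A : Finset V, IsRegIndep G A ∧ A.card = k}

/-- The independence number. -/
noncomputable def alphaNum [Fintype V] (G : SimpleGraph V) : ℕ :=
  sSup {k | ∃ A : Finset V, (∀ u ∈ A, ∀ v ∈ A, ¬ G.Adj u v) ∧ A.card = k}

/-- An irregular dominating set: dominating, with the outside vertices having
pairwise distinct numbers of neighbours in the set. -/
def IsIrrDom [Fintype V] (G : SimpleGraph V) (D : Finset V) : Prop :=
  (∀ v ∉ D, ∃ w ∈ D, G.Adj v w) ∧
  (∀ u ∉ D, ∀ v ∉ D, u ≠ v →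
    Nat.card {w | w ∈ D ∧ G.Adj u w} ≠ Nat.card {w | w ∈ D ∧ G.Adj v w})

/-- The irregular domination number. -/
noncomputable def gammaIr [Fintype V] (G : SimpleGraph V) : ℕ :=
  sInf {k | ∃ D : Finset V, IsIrrDom G D ∧ D.card = k}

/-- Minimum degree. -/
noncomputable def minDeg [Fintype V] (G : SimpleGraph V) : ℕ :=
  sInf (Set.range (deg G))

/-- Maximum degree. -/
noncomputable def maxDeg [Fintype V] (G : SimpleGraph V) : ℕ :=
  sSup (Set.range (deg G))

/-- The maximum cut: the maximum number of edges with exactly one endpoint in a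
set `A` of vertices (each crossing edge counted once, as the ordered pair with
first coordinate in `A`). -/
noncomputable def maxCut [Fintype V] (G : SimpleGraph V) : ℕ :=
  sSup {k | ∃ A : Set V, k = Nat.card {p : V × V | p.1 ∈ A ∧ p.2 ∉ A ∧ G.Adj p.1 p.2}}

theorem stmt0 [Fintype V] [Nonempty V] (G : SimpleGraph V) :
    alphaIr G ≤ (Fintype.card V - minDeg G + 1) / 2 := by
  classical
  apply csSup_le'
  rintro k ⟨A, ⟨hind, hdeg⟩, rfl⟩
  rcases A.eq_empty_or_nonempty with rfl | ⟨v0, hv0⟩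
  · simp
  set n := Fintype.card V with hn
  set δ := minDeg G with hδdef
  have hdegle : ∀ v ∈ A, deg G v ≤ n - A.card := by
    intro v hv
    have hsub : {w | G.Adj v w} ⊆ (↑A : Set V)ᶜ := by
      intro w hw hwA
      exact hind v hv w hwA hw
    have h1 : deg G v = Set.ncard {w | G.Adj v w} :=
      (Nat.card_coe_set_eq _).symm ▸ rfl
    rw [h1]
    calc Set.ncard {w | G.Adj v w} ≤ ((↑A : Set V)ᶜ).ncard :=
          Set.ncard_le_ncard hsub (Set.toFinite _)
      _ = (Aᶜ : Finset V).card := by rw [← Finset.coe_compl, Set.ncard_coe_finset]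
      _ = n - A.card := by rw [Finset.card_compl]
  have hδle : ∀ v ∈ A, δ ≤ deg G v := fun v _ => Nat.sInf_le ⟨v, rfl⟩
  have himg : A.image (deg G) ⊆ Finset.Icc δ (n - A.card) := by
    intro d hd
    obtain ⟨v, hv, rfl⟩ := Finset.mem_image.mp hd
    exact Finset.mem_Icc.mpr ⟨hδle v hv, hdegle v hv⟩
  have hcard : A.card = (A.image (deg G)).card :=
    (Finset.card_image_of_injOn fun u hu v hv h => by
      by_contra hne; exact hdeg u hu v hv hne h).symm
  have hk : A.card ≤ (n - A.card) + 1 - δ := by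
    calc A.card = (A.image (deg G)).card := hcard
      _ ≤ (Finset.Icc δ (n - A.card)).card := Finset.card_le_card himg
      _ = (n - A.card) + 1 - δ := Nat.card_Icc _ _
  have h1 : δ ≤ n - A.card := le_trans (hδle v0 hv0) (hdegle v0 hv0)
  have h2 : A.card ≤ n := Finset.card_le_univ A
  omega
end

section
/- For any finite simple graph G on n vertices with m edges, the irregular independence number α_ir(G) satisfies α_ir(G) ≤ (1 + √(2n² - 2n - 4m + 1))/2. -/
open Finset

variable {V : Type*}

/-- Sum of distinct naturals in a finset is at least 0+1+...+(card-1). -/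
lemma sum_range_card_le_sum (t : Finset ℕ) : ∑ i ∈ Finset.range t.card, i ≤ ∑ x ∈ t, x := by
  induction t using Finset.strongInduction with
  | _ t ih =>
    rcases t.eq_empty_or_nonempty with rfl | ht
    · simp
    · set M := t.max' ht with hMdef
      have hM : M ∈ t := t.max'_mem ht
      have hcard : t.card ≤ M + 1 := by
        have hsub : t ⊆ Finset.range (M + 1) :=
          fun x hx => Finset.mem_range.2 (Nat.lt_succ_of_le (t.le_max' x hx))
        simpa using Finset.card_le_card hsub
      have h1 : (t.erase M).card = t.card - 1 := Finset.card_erase_of_mem hM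
      have h2 := ih (t.erase M) (Finset.erase_ssubset hM)
      rw [h1] at h2
      have h3 : ∑ x ∈ t, x = M + ∑ x ∈ t.erase M, x := (Finset.add_sum_erase _ _ hM).symm
      obtain ⟨c, hc⟩ : ∃ c, t.card = c + 1 :=
        ⟨t.card - 1, (Nat.succ_pred_eq_of_pos (Finset.card_pos.2 ht)).symm⟩
      rw [hc, Finset.sum_range_succ, h3]
      have hcM : c ≤ M := by omega
      have h2' : ∑ i ∈ Finset.range c, i ≤ ∑ x ∈ t.erase M, x := by
        rwa [hc, Nat.add_sub_cancel] at h2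
      omega

lemma key_ineq [Fintype V] (G : SimpleGraph V) (A : Finset V) (hA : IsIrrIndep G A) :
    (2 * (A.card : ℝ) - 1) ^ 2 ≤ 2 * (Fintype.card V : ℝ) ^ 2 -
      2 * (Fintype.card V : ℝ) - 4 * (Nat.card G.edgeSet : ℝ) + 1 := by
  classical
  set n := Fintype.card V with hn
  set k := A.card with hk
  have hkn : k ≤ n := by simpa using Finset.card_le_univ A
  set M := n - k with hMdef
  have hdeg : ∀ v, deg G v = G.degree v := fun v => by
    rw [deg, Nat.card_eq_fintype_card]; exact G.card_neighborSet_eq_degree v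
  have hm : Nat.card G.edgeSet = G.edgeFinset.card := by
    simp [Nat.card_coe_set_eq, SimpleGraph.edgeFinset, Set.ncard_eq_toFinset_card']
  set Ac := univ \ A with hAc
  have hAcCard : Ac.card = M := by
    rw [hAc, Finset.card_sdiff_of_subset (subset_univ A), Finset.card_univ]
  -- for u ∈ A, neighbors are in Ac
  have hNA : ∀ u ∈ A, G.neighborFinset u ⊆ Ac := by
    intro u hu w hw
    rw [SimpleGraph.mem_neighborFinset] at hw
    simp only [hAc, mem_sdiff, mem_univ, true_and]
    exact fun hwA => hA.1 u hu w hwA hw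
  have hdegA : ∀ u ∈ A, G.degree u ≤ M := by
    intro u hu
    calc G.degree u ≤ Ac.card := Finset.card_le_card (hNA u hu)
      _ = M := hAcCard
  -- double counting edges between A and Ac
  have hswap : ∑ v ∈ Ac, (A.filter (fun u => G.Adj v u)).card
      = ∑ u ∈ A, (Ac.filter (fun v => G.Adj v u)).card := by
    simp only [Finset.card_filter]
    exact Finset.sum_comm
  have hfilterA : ∀ u ∈ A, Ac.filter (fun v => G.Adj v u) = G.neighborFinset u := by
    intro u hu
    ext v
    simp only [mem_filter, SimpleGraph.mem_neighborFinset]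
    constructor
    · rintro ⟨_, h⟩; exact h.symm
    · intro h
      exact ⟨hNA u hu (by rwa [SimpleGraph.mem_neighborFinset]), h.symm⟩
  have hdouble : ∑ v ∈ Ac, (A.filter (fun u => G.Adj v u)).card = ∑ u ∈ A, G.degree u := by
    rw [hswap]
    exact Finset.sum_congr rfl fun u hu => by rw [hfilterA u hu, SimpleGraph.degree]
  -- outside degree bound
  have hdegOut : ∀ v ∈ Ac, G.degree v ≤ (A.filter (fun u => G.Adj v u)).card + (M - 1) := by
    intro v hv
    have hsplit : (G.neighborFinset v).card
        = ((G.neighborFinset v).filter (· ∈ A)).card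
          + ((G.neighborFinset v).filter (¬ · ∈ A)).card :=
      (Finset.card_filter_add_card_filter_not _).symm
    have e1 : (G.neighborFinset v).filter (· ∈ A) ⊆ A.filter (fun u => G.Adj v u) := by
      intro w hw
      simp only [mem_filter, SimpleGraph.mem_neighborFinset] at hw ⊢
      exact ⟨hw.2, hw.1⟩
    have e2 : (G.neighborFinset v).filter (¬ · ∈ A) ⊆ Ac.erase v := by
      intro w hw
      simp only [mem_filter, SimpleGraph.mem_neighborFinset] at hw
      refine Finset.mem_erase.2 ⟨fun h => ?_, by simp [hAc, hw.2]⟩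
      exact G.irrefl (h ▸ hw.1)
    have c2 : ((G.neighborFinset v).filter (¬ · ∈ A)).card ≤ M - 1 := by
      calc ((G.neighborFinset v).filter (¬ · ∈ A)).card ≤ (Ac.erase v).card :=
            Finset.card_le_card e2
        _ = M - 1 := by rw [Finset.card_erase_of_mem hv, hAcCard]
    calc G.degree v = _ := hsplit
      _ ≤ (A.filter (fun u => G.Adj v u)).card + (M - 1) :=
          Nat.add_le_add (Finset.card_le_card e1) c2
  -- sums
  set SA := ∑ u ∈ A, G.degree u with hSA
  set SO := ∑ v ∈ Ac, G.degree v with hSO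
  have hf1 : 2 * G.edgeFinset.card = SA + SO := by
    rw [← G.sum_degrees_eq_twice_card_edges, hSA, hSO, ← Finset.sum_sdiff (subset_univ A)]
    ring
  have hf2 : SO ≤ SA + M * (M - 1) := by
    calc SO ≤ ∑ v ∈ Ac, ((A.filter (fun u => G.Adj v u)).card + (M - 1)) :=
          Finset.sum_le_sum hdegOut
      _ = SA + M * (M - 1) := by
          rw [Finset.sum_add_distrib, hdouble, Finset.sum_const, hAcCard, smul_eq_mul]
  -- distinct degrees: 2*SA + k*(k-1) ≤ 2*k*M
  have hf3 : 2 * SA + k * (k - 1) ≤ 2 * (k * M) := by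
    set g : V → ℕ := fun u => M - G.degree u with hg
    have hginj : ∀ u ∈ A, ∀ v ∈ A, g u = g v → u = v := by
      intro u hu v hv huv
      by_contra hne
      apply hA.2 u hu v hv hne
      rw [hdeg, hdeg]
      have h1 := hdegA u hu
      have h2 := hdegA v hv
      simp only [hg] at huv
      omega
    have hsum_g : ∑ i ∈ Finset.range k, i ≤ ∑ u ∈ A, g u := by
      have himg : (A.image g).card = k := Finset.card_image_of_injOn hginj
      calc ∑ i ∈ Finset.range k, i = ∑ i ∈ Finset.range (A.image g).card, i := by rw [himg]
        _ ≤ ∑ x ∈ A.image g, x := sum_range_card_le_sum _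
        _ = ∑ u ∈ A, g u := Finset.sum_image hginj
    have hsum_split : SA + ∑ u ∈ A, g u = k * M := by
      rw [hSA, ← Finset.sum_add_distrib]
      have : ∀ u ∈ A, G.degree u + g u = M := by
        intro u hu
        have := hdegA u hu
        simp only [hg]
        omega
      rw [Finset.sum_congr rfl this, Finset.sum_const, smul_eq_mul]
    have hrange2 : (∑ i ∈ Finset.range k, i) * 2 = k * (k - 1) :=
      Finset.sum_range_id_mul_two k
    omega
  -- cast to ℝ
  have hMcast : (M : ℝ) = (n : ℝ) - k := by
    rw [hMdef, Nat.cast_sub hkn]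
  have hMM : ((M * (M - 1) : ℕ) : ℝ) ≤ (M : ℝ) * ((M : ℝ) - 1) := by
    rcases Nat.eq_zero_or_pos M with h | h
    · simp [h]
    · rw [Nat.cast_mul, Nat.cast_sub h]; norm_num
  have hkk : (k : ℝ) * ((k : ℝ) - 1) ≤ ((k * (k - 1) : ℕ) : ℝ) := by
    rcases Nat.eq_zero_or_pos k with h | h
    · simp [h]
    · rw [Nat.cast_mul, Nat.cast_sub h]; norm_num
  have hf1R : 2 * ((Nat.card G.edgeSet : ℕ) : ℝ) = (SA : ℝ) + SO := by
    rw [hm]; exact_mod_cast congrArg (Nat.cast : ℕ → ℝ) hf1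
  have hf2R : (SO : ℝ) ≤ SA + ((M * (M - 1) : ℕ) : ℝ) := by exact_mod_cast hf2
  have hf3R : 2 * (SA : ℝ) + ((k * (k - 1) : ℕ) : ℝ) ≤ 2 * ((k : ℝ) * M) := by exact_mod_cast hf3
  nlinarith [hf1R, hf2R, hf3R, hMM, hkk, hMcast]

theorem stmt1 [Fintype V] (G : SimpleGraph V) :
    (alphaIr G : ℝ) ≤ (1 + Real.sqrt (2 * (Fintype.card V : ℝ) ^ 2 -
      2 * (Fintype.card V : ℝ) - 4 * (Nat.card G.edgeSet : ℝ) + 1)) / 2 := by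
  classical
  have hne : {k | ∃ A : Finset V, IsIrrIndep G A ∧ A.card = k}.Nonempty :=
    ⟨0, ∅, ⟨by simp, by simp⟩, by simp⟩
  have hbdd : BddAbove {k | ∃ A : Finset V, IsIrrIndep G A ∧ A.card = k} := by
    refine ⟨Fintype.card V, fun k hk => ?_⟩
    obtain ⟨A, _, rfl⟩ := hk
    simpa using Finset.card_le_univ A
  obtain ⟨A, hA, hcard⟩ := Nat.sSup_mem hne hbdd
  have hcard' : alphaIr G = A.card := hcard.symm
  have hkey := key_ineq G A hA
  rw [← hcard'] at hkey
  set x : ℝ := 2 * (Fintype.card V : ℝ) ^ 2 - 2 * (Fintype.card V : ℝ) -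
    4 * (Nat.card G.edgeSet : ℝ) + 1 with hx
  have hx0 : 0 ≤ x := le_trans (sq_nonneg _) hkey
  have hs : Real.sqrt x ^ 2 = x := Real.sq_sqrt hx0
  have hs0 : 0 ≤ Real.sqrt x := Real.sqrt_nonneg x
  have h1 : 2 * (alphaIr G : ℝ) - 1 ≤ Real.sqrt x := by
    rcases le_or_gt (2 * (alphaIr G : ℝ) - 1) 0 with h | h
    · linarith
    · nlinarith [hs, hkey]
  linarith
end

section
/- For any finite simple graph G with minimum degree δ and maximum cut β = max over subsets A of V(G) of the number of edges between A and V(G)\A, the irregular independence number satisfies α_ir(G) ≤ (-2δ + 1 + √((2δ - 1)² + 8β))/2. -/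
open Finset

variable {V : Type*}

lemma sum_distinct_ge (B : Finset ℕ) (d : ℕ) :
    (∀ b ∈ B, d ≤ b) → ∑ i ∈ Finset.range B.card, (d + i) ≤ ∑ b ∈ B, b := by
  induction B using Finset.strongInduction with
  | _ B ih =>
    intro hB
    rcases B.eq_empty_or_nonempty with rfl | hne
    · simp
    · obtain ⟨m, hmB, hmax⟩ : ∃ m ∈ B, ∀ b ∈ B, b ≤ m :=
        ⟨B.max' hne, B.max'_mem hne, fun b hb => B.le_max' b hb⟩
      have hcard : (B.erase m).card = B.card - 1 := Finset.card_erase_of_mem hmB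
      have h1 : ∑ i ∈ Finset.range (B.card - 1), (d + i) ≤ ∑ b ∈ B.erase m, b := by
        have := ih (B.erase m) (Finset.erase_ssubset hmB)
          (fun b hb => hB b (Finset.mem_of_mem_erase hb))
        rwa [hcard] at this
      have hk : 1 ≤ B.card := hne.card_pos
      have hmge : d + (B.card - 1) ≤ m := by
        have hsubI : B ⊆ Finset.Icc d m :=
          fun b hb => Finset.mem_Icc.2 ⟨hB b hb, hmax b hb⟩
        have := Finset.card_le_card hsubI
        rw [Nat.card_Icc] at this
        omega
      calc ∑ i ∈ Finset.range B.card, (d + i)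
          = ∑ i ∈ Finset.range (B.card - 1 + 1), (d + i) := by
            rw [Nat.sub_add_cancel hk]
        _ = ∑ i ∈ Finset.range (B.card - 1), (d + i) + (d + (B.card - 1)) :=
            Finset.sum_range_succ _ _
        _ ≤ ∑ b ∈ B.erase m, b + m := add_le_add h1 hmge
        _ = ∑ b ∈ B, b := Finset.sum_erase_add B _ hmB

theorem stmt3 [Fintype V] [Nonempty V] (G : SimpleGraph V) :
    (alphaIr G : ℝ) ≤ (-2 * (minDeg G : ℝ) + 1 +
      Real.sqrt ((2 * (minDeg G : ℝ) - 1) ^ 2 + 8 * (maxCut G : ℝ))) / 2 := by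
  classical
  set d := minDeg G with hd
  set β := maxCut G with hβ
  -- obtain a witness for alphaIr
  have hmem : alphaIr G ∈ {k | ∃ A : Finset V, IsIrrIndep G A ∧ A.card = k} := by
    apply Nat.sSup_mem
    · exact ⟨0, ∅, ⟨by simp, by simp⟩, by simp⟩
    · exact ⟨Fintype.card V, fun k ⟨A, _, hA⟩ => hA ▸ Finset.card_le_univ A⟩
  obtain ⟨A, ⟨hind, hdist⟩, hcard⟩ := hmem
  set k := alphaIr G with hk
  -- min degree lower bound
  have hdle : ∀ v, d ≤ deg G v := fun v => csInf_le (OrderBot.bddBelow _) ⟨v, rfl⟩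
  -- sum of degrees over A is at least ∑_{i<k} (d+i)
  have hinj : ∀ x ∈ A, ∀ y ∈ A, deg G x = deg G y → x = y := by
    intro x hx y hy hxy
    by_contra hne
    exact hdist x hx y hy hne hxy
  have hsum1 : ∑ i ∈ Finset.range k, (d + i) ≤ ∑ v ∈ A, deg G v := by
    have himg : (A.image (deg G)).card = A.card := Finset.card_image_of_injOn hinj
    have := sum_distinct_ge (A.image (deg G)) d
      (fun b hb => by
        obtain ⟨v, _, rfl⟩ := Finset.mem_image.1 hb
        exact hdle v)
    rw [himg, hcard, Finset.sum_image hinj] at this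
    exact this
  -- the cut induced by A has size ∑ v ∈ A, deg G v
  have hcut : Nat.card {p : V × V | p.1 ∈ (↑A : Set V) ∧ p.2 ∉ (↑A : Set V) ∧ G.Adj p.1 p.2}
      = ∑ v ∈ A, deg G v := by
    have e : {p : V × V | p.1 ∈ (↑A : Set V) ∧ p.2 ∉ (↑A : Set V) ∧ G.Adj p.1 p.2} ≃
        (v : {x // x ∈ A}) × {w | G.Adj (↑v) w} :=
      { toFun := fun p => ⟨⟨p.1.1, p.2.1⟩, ⟨p.1.2, p.2.2.2⟩⟩
        invFun := fun x => ⟨(↑x.1, ↑x.2),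
          ⟨x.1.2, fun h => hind x.1 x.1.2 x.2 h x.2.2, x.2.2⟩⟩
        left_inv := fun p => rfl
        right_inv := fun x => rfl }
    rw [Nat.card_congr e]
    rw [Nat.card_eq_fintype_card, Fintype.card_sigma]
    rw [← Finset.sum_coe_sort A (deg G)]
    congr 1
    funext v
    rw [show deg G (↑v) = Nat.card {w | G.Adj (↑v) w} from rfl, Nat.card_eq_fintype_card]
  -- maxCut is at least this cut
  have hcutle : ∑ v ∈ A, deg G v ≤ β := by
    rw [← hcut]
    apply le_csSup
    · refine ⟨Fintype.card (V × V), fun n hn => ?_⟩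
      obtain ⟨S, rfl⟩ := hn
      rw [← Nat.card_eq_fintype_card]
      exact Nat.card_le_card_of_injective _ Subtype.val_injective
    · exact ⟨(↑A : Set V), rfl⟩
  -- combine in ℕ
  have hnat : ∑ i ∈ Finset.range k, (d + i) ≤ β := le_trans hsum1 hcutle
  have hnat2 : 2 * k * d + k * (k - 1) ≤ 2 * β := by
    have h2 : 2 * ∑ i ∈ Finset.range k, (d + i) = 2 * k * d + k * (k - 1) := by
      rw [Finset.sum_add_distrib, Finset.sum_const, Finset.card_range, Nat.mul_add,
        ← Finset.sum_range_id_mul_two k]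
      ring
    omega
  -- cast to ℝ
  have hcast : (k : ℝ) * ((k - 1 : ℕ) : ℝ) = (k : ℝ) ^ 2 - k := by
    rcases Nat.eq_zero_or_pos k with h0 | h0
    · simp [h0]
    · rw [Nat.cast_sub h0]
      push_cast
      ring
  have hreal : 2 * (k : ℝ) * d + ((k : ℝ) ^ 2 - k) ≤ 2 * β := by
    have := (Nat.cast_le (α := ℝ)).2 hnat2
    push_cast at this
    rw [hcast] at this
    linarith
  -- final algebra
  set t : ℝ := 2 * (k : ℝ) + 2 * (d : ℝ) - 1 with ht
  have hts : t ≤ Real.sqrt ((2 * (d : ℝ) - 1) ^ 2 + 8 * (β : ℝ)) := by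
    calc t ≤ |t| := le_abs_self t
      _ = Real.sqrt (t ^ 2) := (Real.sqrt_sq_eq_abs t).symm
      _ ≤ Real.sqrt ((2 * (d : ℝ) - 1) ^ 2 + 8 * (β : ℝ)) := by
          apply Real.sqrt_le_sqrt
          rw [ht]
          nlinarith [hreal]
  rw [hk] at *
  linarith
end

section
/- For any finite simple graph G with minimum degree δ and m edges, α_ir(G) ≤ (-2δ + 1 + √((2δ - 1)² + 8m))/2. -/
open Finset

variable {V : Type*}

lemma sum_ge_range (S : Finset ℕ) : ∑ i ∈ Finset.range S.card, i ≤ ∑ x ∈ S, x := by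
  induction' hn : S.card with n ih generalizing S
  · simp
  · obtain ⟨M, hM⟩ := Finset.max_of_nonempty (Finset.card_pos.mp (by rw [hn]; exact n.succ_pos))
    have hMS : M ∈ S := Finset.mem_of_max hM
    have hcard : (S.erase M).card = n := by rw [Finset.card_erase_of_mem hMS, hn]; rfl
    have hle : n ≤ M := by
      have : S ⊆ Finset.range (M + 1) := fun x hx =>
        Finset.mem_range.mpr (Nat.lt_succ_of_le (Finset.le_max_of_eq hx hM))
      have := Finset.card_le_card this
      simp [hn] at this; omega
    have h1 := ih (S.erase M) hcard
    have h2 : ∑ x ∈ S, x = M + ∑ x ∈ S.erase M, x := (Finset.add_sum_erase S id hMS).symm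
    rw [Finset.sum_range_succ]
    omega

lemma sum_ge_shift (S : Finset ℕ) (d : ℕ) (h : ∀ x ∈ S, d ≤ x) :
    S.card * d + ∑ i ∈ Finset.range S.card, i ≤ ∑ x ∈ S, x := by
  have hinj : Set.InjOn (· - d) S := fun x hx y hy hxy => by
    have := h x hx; have := h y hy; simp only at hxy; omega
  have hcard : (S.image (· - d)).card = S.card := Finset.card_image_of_injOn hinj
  have h1 := sum_ge_range (S.image (· - d))
  rw [hcard] at h1
  have h2 : ∑ y ∈ S.image (· - d), y = ∑ x ∈ S, (x - d) :=
    Finset.sum_image (fun x hx y hy => hinj hx hy)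
  have h3 : ∑ x ∈ S, x = ∑ x ∈ S, (x - d) + S.card * d := by

    calc ∑ x ∈ S, x = ∑ x ∈ S, ((x - d) + d) :=
          Finset.sum_congr rfl (fun x hx => by have := h x hx; omega)
      _ = ∑ x ∈ S, (x - d) + ∑ _x ∈ S, d := Finset.sum_add_distrib
      _ = ∑ x ∈ S, (x - d) + S.card * d := by rw [Finset.sum_const, smul_eq_mul]
  omega

theorem stmt4 [Fintype V] [Nonempty V] (G : SimpleGraph V) :
    (alphaIr G : ℝ) ≤ (-2 * (minDeg G : ℝ) + 1 +
      Real.sqrt ((2 * (minDeg G : ℝ) - 1) ^ 2 + 8 * (Nat.card G.edgeSet : ℝ))) / 2 := by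
  classical
  have hdeg : ∀ v, deg G v = G.degree v := fun v => by
    simp [deg, ← SimpleGraph.card_neighborSet_eq_degree, Nat.card_eq_fintype_card,
      SimpleGraph.neighborSet]
    exact (Fintype.card_subtype _).symm
  have hm : Nat.card G.edgeSet = G.edgeFinset.card := by
    rw [Nat.card_eq_fintype_card, SimpleGraph.edgeFinset_card]
  -- extract a maximum irregular independent set
  have hne : Set.Nonempty {k | ∃ A : Finset V, IsIrrIndep G A ∧ A.card = k} :=
    ⟨0, ∅, ⟨by simp, by simp⟩, rfl⟩
  have hbdd : BddAbove {k | ∃ A : Finset V, IsIrrIndep G A ∧ A.card = k} :=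
    ⟨Fintype.card V, fun k ⟨A, _, hA⟩ => hA ▸ Finset.card_le_univ A⟩
  obtain ⟨A, hA, hAcard⟩ := Nat.sSup_mem hne hbdd
  have hAc : A.card = alphaIr G := hAcard
  -- lower bound on degree sum
  have hdmin : ∀ v ∈ A, minDeg G ≤ deg G v := fun v _ => Nat.sInf_le ⟨v, rfl⟩
  have hinjdeg : Set.InjOn (deg G) A := fun x hx y hy hxy => by
    by_contra hne'
    exact hA.2 x hx y hy hne' hxy
  have hScard : (A.image (deg G)).card = A.card := Finset.card_image_of_injOn hinjdeg
  have hSsum : ∑ x ∈ A.image (deg G), x = ∑ v ∈ A, deg G v :=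
    Finset.sum_image (fun x hx y hy => hinjdeg hx hy)
  have hlow : A.card * minDeg G + ∑ i ∈ Finset.range A.card, i ≤ ∑ v ∈ A, deg G v := by
    have := sum_ge_shift (A.image (deg G)) (minDeg G)
      (fun x hx => by
        obtain ⟨v, hv, rfl⟩ := Finset.mem_image.mp hx
        exact hdmin v hv)
    rwa [hScard, hSsum] at this
  -- upper bound on degree sum: independence
  have hdisj : ∀ x ∈ A, ∀ y ∈ A, x ≠ y →
      Disjoint (G.incidenceFinset x) (G.incidenceFinset y) := by
    intro x hx y hy hxy
    rw [Finset.disjoint_left]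
    intro e hex hey
    rw [SimpleGraph.mem_incidenceFinset] at hex hey
    obtain ⟨he, hxe⟩ := hex
    obtain ⟨_, hye⟩ := hey
    have : e = s(x, y) := (Sym2.mem_and_mem_iff hxy).mp ⟨hxe, hye⟩
    rw [this, SimpleGraph.mem_edgeSet] at he
    exact hA.1 x hx y hy he
  have hsub : A.biUnion (fun v => G.incidenceFinset v) ⊆ G.edgeFinset := by
    intro e he
    obtain ⟨v, _, hv⟩ := Finset.mem_biUnion.mp he
    rw [SimpleGraph.mem_incidenceFinset] at hv
    exact SimpleGraph.mem_edgeFinset.mpr hv.1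
  have hhigh : ∑ v ∈ A, deg G v ≤ G.edgeFinset.card := by
    calc ∑ v ∈ A, deg G v = ∑ v ∈ A, (G.incidenceFinset v).card := by
          refine Finset.sum_congr rfl fun v _ => ?_
          rw [hdeg v, SimpleGraph.card_incidenceFinset_eq_degree]
      _ = (A.biUnion (fun v => G.incidenceFinset v)).card := (Finset.card_biUnion hdisj).symm
      _ ≤ G.edgeFinset.card := Finset.card_le_card hsub
  -- combine in ℕ
  have hkey : 2 * (A.card * minDeg G) + A.card * (A.card - 1) ≤ 2 * G.edgeFinset.card := by
    have h2 := Finset.sum_range_id_mul_two A.card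
    omega
  have hkey' : 2 * (A.card * minDeg G) + A.card * A.card ≤ 2 * G.edgeFinset.card + A.card := by
    have : A.card * A.card = A.card * (A.card - 1) + A.card := by
      cases' Nat.eq_zero_or_pos A.card with h h
      · simp [h]
      · have : A.card - 1 + 1 = A.card := Nat.succ_pred_eq_of_pos h
        nlinarith [this]
    omega
  -- move to ℝ
  set a : ℝ := (alphaIr G : ℝ) with hadef
  set d : ℝ := (minDeg G : ℝ) with hddef
  set m : ℝ := (Nat.card G.edgeSet : ℝ) with hmdef
  have hcast : 2 * (a * d) + a * a ≤ 2 * m + a := by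
    rw [hadef, hddef, hmdef, hm]
    rw [← hAc]
    exact_mod_cast hkey'
  have ha0 : (0 : ℝ) ≤ a := by rw [hadef]; positivity
  have h1 : (2 * a + 2 * d - 1) ^ 2 ≤ (2 * d - 1) ^ 2 + 8 * m := by nlinarith
  have h2 : 2 * a + 2 * d - 1 ≤ Real.sqrt ((2 * d - 1) ^ 2 + 8 * m) := by
    calc 2 * a + 2 * d - 1 ≤ |2 * a + 2 * d - 1| := le_abs_self _
      _ = Real.sqrt ((2 * a + 2 * d - 1) ^ 2) := (Real.sqrt_sq_eq_abs _).symm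
      _ ≤ _ := Real.sqrt_le_sqrt h1
  linarith
end

section
/- For any finite simple graph G on n vertices, α_ir(G) + α_reg(G) ≤ n + 1, with equality if and only if G has no edges. -/
open Finset

variable {V : Type*}

lemma deg_pos [Fintype V] {G : SimpleGraph V} {u v : V} (h : G.Adj u v) : 0 < deg G u := by
  have : Nonempty {w | G.Adj u w} := ⟨⟨v, h⟩⟩
  exact Nat.card_pos

lemma exists_adj_of_deg_pos [Fintype V] {G : SimpleGraph V} {u : V} (h : 0 < deg G u) :
    ∃ v, G.Adj u v := by
  obtain ⟨⟨⟨v, hv⟩⟩, -⟩ := Nat.card_pos_iff.mp h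
  exact ⟨v, hv⟩

lemma deg_bot [Fintype V] (v : V) : deg (⊥ : SimpleGraph V) v = 0 := by
  simp [deg]

lemma bddAboveIr [Fintype V] (G : SimpleGraph V) :
    BddAbove {k | ∃ A : Finset V, IsIrrIndep G A ∧ A.card = k} := by
  refine ⟨Fintype.card V, ?_⟩
  rintro k ⟨A, -, rfl⟩
  simpa using Finset.card_le_univ A

lemma bddAboveReg [Fintype V] (G : SimpleGraph V) :
    BddAbove {k | ∃ A : Finset V, IsRegIndep G A ∧ A.card = k} := by
  refine ⟨Fintype.card V, ?_⟩
  rintro k ⟨A, -, rfl⟩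
  simpa using Finset.card_le_univ A

lemma alphaIr_mem [Fintype V] (G : SimpleGraph V) :
    ∃ A : Finset V, IsIrrIndep G A ∧ A.card = alphaIr G := by
  have h := Nat.sSup_mem (s := {k | ∃ A : Finset V, IsIrrIndep G A ∧ A.card = k})
    ⟨0, ∅, ⟨by simp, by simp⟩, rfl⟩ (bddAboveIr G)
  exact h

lemma alphaReg_mem [Fintype V] (G : SimpleGraph V) :
    ∃ A : Finset V, IsRegIndep G A ∧ A.card = alphaReg G := by
  have h := Nat.sSup_mem (s := {k | ∃ A : Finset V, IsRegIndep G A ∧ A.card = k})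
    ⟨0, ∅, ⟨by simp, by simp⟩, rfl⟩ (bddAboveReg G)
  exact h

lemma key_lemma [Fintype V] (G : SimpleGraph V) {A B : Finset V}
    (hA : IsIrrIndep G A) (hB : IsRegIndep G B) :
    A.card + B.card ≤ Fintype.card V + 1 ∧
    (G ≠ ⊥ → A.card + B.card ≤ Fintype.card V) := by
  classical
  have hcap : (A ∩ B).card ≤ 1 := by
    refine Finset.card_le_one.2 ?_
    intro u hu v hv
    by_contra hne
    exact hA.2 u (Finset.mem_of_mem_inter_left hu) v (Finset.mem_of_mem_inter_left hv) hne
      (hB.2 u (Finset.mem_of_mem_inter_right hu) v (Finset.mem_of_mem_inter_right hv))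
  have hcup : (A ∪ B).card ≤ Fintype.card V := by
    simpa using Finset.card_le_univ (A ∪ B)
  have hsum := Finset.card_union_add_card_inter A B
  refine ⟨by omega, ?_⟩
  intro hG
  by_contra h
  push_neg at h
  have hunion : ∀ v : V, v ∈ A ∪ B := by
    intro v
    by_contra hv
    have : (A ∪ B).card < Finset.univ.card :=
      Finset.card_lt_card ⟨Finset.subset_univ _, fun hs => hv (hs (Finset.mem_univ v))⟩
    have : (A ∪ B).card < Fintype.card V := by simpa using this
    omega
  obtain ⟨x, hx⟩ := Finset.card_pos.1 (show 0 < (A ∩ B).card by omega)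
  have hxA := Finset.mem_of_mem_inter_left hx
  have hxB := Finset.mem_of_mem_inter_right hx
  have hedge : ∃ u v, G.Adj u v := by
    by_contra h'
    push_neg at h'
    apply hG
    ext u v
    simp [h' u v]
  obtain ⟨u, v, huv⟩ := hedge
  have hb : ∃ b ∈ B, 0 < deg G b := by
    rcases Finset.mem_union.1 (hunion u) with hu | hu
    · have hvB : v ∈ B := by
        rcases Finset.mem_union.1 (hunion v) with hv | hv
        · exact absurd huv (hA.1 u hu v hv)
        · exact hv
      exact ⟨v, hvB, deg_pos huv.symm⟩
    · exact ⟨u, hu, deg_pos huv⟩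
  obtain ⟨b, hbB, hbpos⟩ := hb
  have hxpos : 0 < deg G x := hB.2 x hxB b hbB ▸ hbpos
  obtain ⟨w, hw⟩ := exists_adj_of_deg_pos hxpos
  rcases Finset.mem_union.1 (hunion w) with hwA | hwB
  · exact hA.1 x hxA w hwA hw
  · exact hB.1 x hxB w hwB hw

theorem stmt5 [Fintype V] [Nonempty V] (G : SimpleGraph V) :
    alphaIr G + alphaReg G ≤ Fintype.card V + 1 ∧
    (alphaIr G + alphaReg G = Fintype.card V + 1 ↔ G = ⊥) := by
  obtain ⟨A, hA, hAc⟩ := alphaIr_mem G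
  obtain ⟨B, hB, hBc⟩ := alphaReg_mem G
  obtain ⟨h1, h2⟩ := key_lemma G hA hB
  refine ⟨by omega, ⟨?_, ?_⟩⟩
  · intro heq
    by_contra hG
    have := h2 hG
    omega
  · rintro rfl
    have hIr1 : alphaIr (⊥ : SimpleGraph V) = 1 := by
      apply le_antisymm
      · apply csSup_le'
        rintro k ⟨C, hC, rfl⟩
        refine Finset.card_le_one.2 ?_
        intro a ha b hb
        by_contra hne
        exact hC.2 a ha b hb hne (by simp [deg_bot])
      · apply le_csSup (bddAboveIr _)
        refine ⟨{Classical.arbitrary V}, ⟨?_, ?_⟩, by simp⟩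
        · intro a ha b hb
          simp
        · intro a ha b hb hne
          simp at ha hb
          exact absurd (ha.trans hb.symm) hne
    have hRegN : alphaReg (⊥ : SimpleGraph V) = Fintype.card V := by
      apply le_antisymm
      · apply csSup_le'
        rintro k ⟨C, hC, rfl⟩
        simpa using Finset.card_le_univ C
      · apply le_csSup (bddAboveReg _)
        exact ⟨Finset.univ, ⟨by simp, by simp [deg_bot]⟩, by simp⟩
    rw [hIr1, hRegN]
    omega
end

section
/- For any finite simple graph G on n ≥ 4 vertices, α_ir(G) · α_reg(G) ≤ ⌊n/2⌋ · ⌈n/2⌉. -/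
open Finset

variable {V : Type*}

lemma amgm_nat (a b n : ℕ) (h : a + b ≤ n) : a * b ≤ n / 2 * ((n + 1) / 2) := by
  have key : a * b * 4 ≤ n * n := by nlinarith [Nat.mul_le_mul h h, two_mul_le_add_sq a b]
  have h1 : a * b ≤ n * n / 4 := (Nat.le_div_iff_mul_le (by norm_num)).mpr key
  have h2 : n * n / 4 = n / 2 * ((n + 1) / 2) := by
    rcases Nat.even_or_odd n with ⟨k, hk⟩ | ⟨k, hk⟩
    · subst hk
      have e1 : (k + k) / 2 = k := by omega
      have e2 : (k + k + 1) / 2 = k := by omega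
      rw [e1, e2]
      have e3 : (k + k) * (k + k) = k * k * 4 := by ring
      rw [e3]
      omega
    · subst hk
      have e1 : (2 * k + 1) / 2 = k := by omega
      have e2 : (2 * k + 1 + 1) / 2 = k + 1 := by omega
      rw [e1, e2]
      have e3 : (2 * k + 1) * (2 * k + 1) = k * (k + 1) * 4 + 1 := by ring
      rw [e3]
      omega
  omega

theorem stmt7 [Fintype V] (G : SimpleGraph V) (hn : 4 ≤ Fintype.card V) :
    alphaIr G * alphaReg G ≤ (Fintype.card V / 2) * ((Fintype.card V + 1) / 2) := by
  classical
  set n := Fintype.card V with hn_def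
  -- extract maximizing sets
  have hIrNe : {k | ∃ A : Finset V, IsIrrIndep G A ∧ A.card = k}.Nonempty :=
    ⟨0, ∅, ⟨by simp, by simp⟩, by simp⟩
  have hIrBdd : BddAbove {k | ∃ A : Finset V, IsIrrIndep G A ∧ A.card = k} := by
    refine ⟨n, fun k hk => ?_⟩
    obtain ⟨A, _, hA⟩ := hk
    rw [← hA]
    exact (Finset.card_le_univ A).trans_eq Finset.card_univ
  have hRegNe : {k | ∃ A : Finset V, IsRegIndep G A ∧ A.card = k}.Nonempty :=
    ⟨0, ∅, ⟨by simp, by simp⟩, by simp⟩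
  have hRegBdd : BddAbove {k | ∃ A : Finset V, IsRegIndep G A ∧ A.card = k} := by
    refine ⟨n, fun k hk => ?_⟩
    obtain ⟨A, _, hA⟩ := hk
    rw [← hA]
    exact (Finset.card_le_univ A).trans_eq Finset.card_univ
  obtain ⟨A, hAind, hAcard⟩ :
      ∃ A : Finset V, IsIrrIndep G A ∧ A.card = alphaIr G :=
    Nat.sSup_mem hIrNe hIrBdd
  obtain ⟨B, hBind, hBcard⟩ :
      ∃ B : Finset V, IsRegIndep G B ∧ B.card = alphaReg G :=
    Nat.sSup_mem hRegNe hRegBdd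
  rw [← hAcard, ← hBcard]
  have hntarget : n ≤ n / 2 * ((n + 1) / 2) := by
    have h1 : 2 ≤ n / 2 := by omega
    have h2 : n ≤ 2 * ((n + 1) / 2) := by omega
    calc n ≤ 2 * ((n + 1) / 2) := h2
      _ ≤ n / 2 * ((n + 1) / 2) := Nat.mul_le_mul_right _ h1
  by_cases hA2 : A.card ≤ 1
  · calc A.card * B.card ≤ 1 * B.card := Nat.mul_le_mul_right _ hA2
      _ = B.card := one_mul _
      _ ≤ n := (Finset.card_le_univ B).trans_eq Finset.card_univ
      _ ≤ n / 2 * ((n + 1) / 2) := hntarget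
  · push_neg at hA2
    have hsum : A.card + B.card ≤ n := by
      by_contra hcon
      push_neg at hcon
      have hinter : (A ∩ B).card ≤ 1 := by
        refine Finset.card_le_one.mpr fun u hu v hv => ?_
        by_contra huv
        have h1 := hAind.2 u (Finset.mem_inter.mp hu).1 v (Finset.mem_inter.mp hv).1 huv
        have h2 := hBind.2 u (Finset.mem_inter.mp hu).2 v (Finset.mem_inter.mp hv).2
        exact h1 h2
      have hcup : (A ∪ B).card ≤ n := (Finset.card_le_univ _).trans_eq Finset.card_univ
      have hkey := Finset.card_union_add_card_inter A B
      have hunivcard : (A ∪ B).card = n := by omega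
      have huniv : A ∪ B = Finset.univ := Finset.eq_univ_of_card _ hunivcard
      obtain ⟨x, hx⟩ : (A ∩ B).Nonempty := Finset.card_pos.mp (by omega)
      have hxA : x ∈ A := (Finset.mem_inter.mp hx).1
      have hxB : x ∈ B := (Finset.mem_inter.mp hx).2
      have hdx : deg G x = 0 := by
        have hemp : {w | G.Adj x w} = (∅ : Set V) := by
          ext w
          simp only [Set.mem_setOf_eq, Set.mem_empty_iff_false, iff_false]
          intro hadj
          have hw : w ∈ A ∪ B := huniv ▸ Finset.mem_univ w
          rcases Finset.mem_union.mp hw with hwA | hwB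
          · exact hAind.1 x hxA w hwA hadj
          · exact hBind.1 x hxB w hwB hadj
        rw [deg, hemp]
        simp
      have hA0 : ∀ u ∈ A, deg G u = 0 := by
        intro u hu
        by_contra hdu
        have hne : Nonempty {w | G.Adj u w} := (Nat.card_ne_zero.mp hdu).1
        obtain ⟨⟨w, hw⟩⟩ := hne
        have hwA : w ∉ A := fun hwA => hAind.1 u hu w hwA hw
        have hwB : w ∈ B := by
          have hmem : w ∈ A ∪ B := huniv ▸ Finset.mem_univ w
          rcases Finset.mem_union.mp hmem with h | h
          · exact absurd h hwA
          · exact h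
        have hdw : deg G w = deg G x := hBind.2 w hwB x hxB
        have hpos : deg G w ≠ 0 := by
          have hne' : Nonempty {w' | G.Adj w w'} := ⟨⟨u, hw.symm⟩⟩
          exact Nat.card_ne_zero.mpr ⟨hne', inferInstance⟩
        exact hpos (hdw.trans hdx)
      obtain ⟨u, hu, v, hv, huv⟩ := Finset.one_lt_card.mp hA2
      exact hAind.2 u hu v hv huv (by rw [hA0 u hu, hA0 v hv])
    exact amgm_nat _ _ _ hsum
end

section
/- If G is a finite simple graph with α_ir(G) = 1, then for any degree value k occurring in G, the subgraph of G induced by the set N_k of vertices of degree k is regular of degree k + |N_k| - n, where n = |V(G)|. -/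
open Finset

variable {V : Type*}

theorem stmt9 [Fintype V] (G : SimpleGraph V) (h : alphaIr G = 1) :
    ∀ k : ℕ, ∀ v : V, deg G v = k →
      Nat.card {w | deg G w = k ∧ G.Adj v w} + Fintype.card V =
        k + Nat.card {w | deg G w = k} := by
  classical
  have key : ∀ u w : V, u ≠ w → ¬ G.Adj u w → deg G u = deg G w := by
    intro u w hne hna
    by_contra hd
    have h2 : 2 ∈ {k | ∃ A : Finset V, IsIrrIndep G A ∧ A.card = k} := by
      refine ⟨{u, w}, ⟨?_, ?_⟩, ?_⟩
      · intro a ha b hb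
        simp only [mem_insert, mem_singleton] at ha hb
        rcases ha with rfl | rfl <;> rcases hb with rfl | rfl
        · exact G.loopless.irrefl _
        · exact hna
        · exact fun hadj => hna hadj.symm
        · exact G.loopless.irrefl _
      · intro a ha b hb hab
        simp only [mem_insert, mem_singleton] at ha hb
        rcases ha with rfl | rfl <;> rcases hb with rfl | rfl
        · exact absurd rfl hab
        · exact hd
        · exact fun hdd => hd hdd.symm
        · exact absurd rfl hab
      · rw [Finset.card_insert_of_notMem (by simpa using hne), Finset.card_singleton]
    have hbdd : BddAbove {k | ∃ A : Finset V, IsIrrIndep G A ∧ A.card = k} := by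
      refine ⟨Fintype.card V, fun k hk => ?_⟩
      obtain ⟨A, _, rfl⟩ := hk
      exact Finset.card_le_univ A
    have := le_csSup hbdd h2
    rw [alphaIr] at h
    omega
  intro k v hv
  have ecard : ∀ p : V → Prop, Nat.card {w | p w} = (univ.filter p).card := by
    intro p
    simp [Nat.card_coe_set_eq, Set.ncard_eq_toFinset_card', Set.toFinset_setOf, Fintype.card_subtype]
  set A := univ.filter (fun w => deg G w = k ∧ G.Adj v w) with hA
  set B := univ.filter (fun w => deg G w ≠ k) with hB
  set K := univ.filter (fun w => deg G w = k) with hK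
  set N := univ.filter (fun w => G.Adj v w) with hN
  have hNeq : N = A ∪ B := by
    ext w
    simp only [hN, hA, hB, mem_filter, mem_union, mem_univ, true_and]
    constructor
    · intro hadj
      by_cases hdk : deg G w = k
      · exact Or.inl ⟨hdk, hadj⟩
      · exact Or.inr hdk
    · rintro (⟨_, hadj⟩ | hdk)
      · exact hadj
      · have hne : v ≠ w := fun hvw => hdk (hvw ▸ hv)
        by_contra hna
        exact hdk ((key v w hne hna) ▸ hv)
  have hdisj : Disjoint A B := by
    rw [Finset.disjoint_left]
    intro w hw hw'
    simp only [hA, hB, mem_filter] at hw hw'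
    exact hw'.2 hw.2.1
  have hNcard : N.card = k := by
    have : deg G v = N.card := by rw [deg, ecard]
    omega
  have hsum : A.card + B.card = k := by
    rw [← hNcard, hNeq, Finset.card_union_of_disjoint hdisj]
  have hKB : K.card + B.card = Fintype.card V := by
    have := Finset.card_filter_add_card_filter_not (s := univ)
      (p := fun w => deg G w = k)
    simpa [hK, hB, Finset.card_univ] using this
  have e1 : Nat.card {w | deg G w = k ∧ G.Adj v w} = A.card := by rw [hA]; simp [Nat.card_coe_set_eq, Set.ncard_eq_toFinset_card', Set.toFinset_setOf, Fintype.card_subtype]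
  have e2 : Nat.card {w | deg G w = k} = K.card := by rw [hK]; simp [Nat.card_coe_set_eq, Set.ncard_eq_toFinset_card', Set.toFinset_setOf, Fintype.card_subtype]
  rw [e1, e2]
  omega
end

section
/- If G is a finite simple graph with at least one vertex and α_ir(G) = 1, then the number of distinct degree values of G, span(G), satisfies span(G) ≤ (1 + √(1 + 8δ))/2, where δ is the minimum degree of G. -/
open Finset

variable {V : Type*}

lemma deg_eq_filter [Fintype V] (G : SimpleGraph V) [DecidableRel G.Adj] (v : V) :
    deg G v = (univ.filter (fun w => G.Adj v w)).card := by
  rw [deg, Nat.card_coe_set_eq, Set.ncard_eq_toFinset_card', Set.toFinset_setOf]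

lemma adj_of_deg_ne [Fintype V] (G : SimpleGraph V) (h : alphaIr G = 1)
    {u v : V} (hd : deg G u ≠ deg G v) : G.Adj u v := by
  classical
  by_contra hadj
  have hne : u ≠ v := fun e => hd (e ▸ rfl)
  have hA : IsIrrIndep G {u, v} := by
    constructor
    · intro a ha b hb
      simp only [mem_insert, mem_singleton] at ha hb
      rcases ha with rfl | rfl <;> rcases hb with rfl | rfl
      · exact G.irrefl
      · exact hadj
      · exact fun hab => hadj hab.symm
      · exact G.irrefl
    · intro a ha b hb hab
      simp only [mem_insert, mem_singleton] at ha hb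
      rcases ha with rfl | rfl <;> rcases hb with rfl | rfl
      · exact absurd rfl hab
      · exact hd
      · exact hd.symm
      · exact absurd rfl hab
  have h2 : (2 : ℕ) ∈ {k | ∃ A : Finset V, IsIrrIndep G A ∧ A.card = k} :=
    ⟨{u, v}, hA, by rw [card_insert_of_notMem (by simpa using hne), card_singleton]⟩
  have hbdd : BddAbove {k | ∃ A : Finset V, IsIrrIndep G A ∧ A.card = k} := by
    refine ⟨Fintype.card V, fun k hk => ?_⟩
    obtain ⟨A, _, rfl⟩ := hk
    exact card_le_card (subset_univ A)
  have := le_csSup hbdd h2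
  rw [alphaIr] at h
  omega

lemma two_mul_sum_ge (T : Finset ℕ) : T.card * (T.card - 1) ≤ 2 * ∑ t ∈ T, t := by
  induction T using Finset.strongInduction with
  | _ T ih =>
    rcases T.eq_empty_or_nonempty with rfl | hT
    · simp
    · have hmax := T.max'_mem hT
      have h1 : T.card ≤ T.max' hT + 1 := by
        have hsub : T ⊆ Finset.range (T.max' hT + 1) := fun x hx =>
          Finset.mem_range.mpr (Nat.lt_succ_of_le (T.le_max' x hx))
        simpa using Finset.card_le_card hsub
      have h2 := ih (T.erase (T.max' hT)) (Finset.erase_ssubset hmax)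
      rw [Finset.card_erase_of_mem hmax] at h2
      rw [← Finset.add_sum_erase T _ hmax]
      have key : ∀ c m S : ℕ, c ≤ m + 1 → (c - 1) * (c - 1 - 1) ≤ 2 * S →
          c * (c - 1) ≤ 2 * (m + S) := by
        intro c m S hc hS
        match c with
        | 0 => omega
        | 1 => omega
        | (k + 2) =>
          have hS' : (k + 1) * k ≤ 2 * S := hS
          have hm : k + 1 ≤ m := by omega
          show (k + 2) * (k + 1) ≤ 2 * (m + S)
          nlinarith
      exact key T.card (T.max' hT) _ h1 h2

theorem stmt11 [Fintype V] [Nonempty V] (G : SimpleGraph V) (h : alphaIr G = 1) :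
    ((Set.range (deg G)).ncard : ℝ) ≤ (1 + Real.sqrt (1 + 8 * (minDeg G : ℝ))) / 2 := by
  classical
  set n := Fintype.card V with hn
  set δ := minDeg G with hδ
  set D : Finset ℕ := univ.image (deg G) with hD
  have hncard : (Set.range (deg G)).ncard = D.card := by
    rw [Set.ncard_eq_toFinset_card', Set.toFinset_range]
  set s := D.card with hs
  -- basic facts
  have hmemD : ∀ d ∈ D, ∃ v : V, deg G v = d := by
    intro d hd
    simp only [hD, mem_image, mem_univ, true_and] at hd
    exact hd
  have hdeg_lt : ∀ v : V, deg G v < n := by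
    intro v
    rw [deg_eq_filter]
    have hsub : univ.filter (fun w => G.Adj v w) ⊆ univ.erase v := by
      intro w hw
      simp only [mem_filter, mem_univ, true_and] at hw
      exact mem_erase.mpr ⟨hw.ne', mem_univ w⟩
    calc (univ.filter (fun w => G.Adj v w)).card ≤ (univ.erase v).card :=
          card_le_card hsub
      _ = n - 1 := by rw [card_erase_of_mem (mem_univ v), card_univ]
      _ < n := by have : 1 ≤ n := Fintype.card_pos; omega
  have hB : ∀ v : V, (univ.filter (fun w => deg G w ≠ deg G v)).card ≤ deg G v := by
    intro v
    have hsub : univ.filter (fun w => deg G w ≠ deg G v) ⊆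
        univ.filter (fun w => G.Adj v w) := by
      intro w hw
      simp only [mem_filter, mem_univ, true_and] at hw ⊢
      exact adj_of_deg_ne G h (Ne.symm hw)
    exact (card_le_card hsub).trans (deg_eq_filter G v).ge
  -- the counting function
  set c : ℕ → ℕ := fun d => (univ.filter (fun v => deg G v = d)).card with hc
  have hfact1 : ∀ d ∈ D, n ≤ d + c d := by
    intro d hd
    obtain ⟨v, rfl⟩ := hmemD d hd
    have hne := hB v
    have hsplit : c (deg G v) + (univ.filter (fun w => deg G w ≠ deg G v)).card = n := by
      have := Finset.card_filter_add_card_filter_not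
        (s := (univ : Finset V)) (p := fun w => deg G w = deg G v)
      simpa [hc, card_univ] using this
    omega
  -- minimum degree facts
  have hrange : (Set.range (deg G)).Nonempty := Set.range_nonempty _
  obtain ⟨v₀, hv₀⟩ := Nat.sInf_mem hrange
  have hδD : δ ∈ D := by
    simp only [hD, mem_image, mem_univ, true_and]
    exact ⟨v₀, hv₀⟩
  have hs1 : 1 ≤ s := card_pos.mpr ⟨δ, hδD⟩
  -- sum over the other degree classes is at most δ
  have hsumδ : ∑ d ∈ D.erase δ, c d ≤ δ := by
    have hfib : (univ.filter (fun v => deg G v ≠ δ)).card = ∑ d ∈ D.erase δ, c d := by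
      rw [Finset.card_eq_sum_card_fiberwise
        (f := deg G) (t := D.erase δ)
        (fun v hv => by
          simp only [mem_coe, mem_filter, mem_univ, true_and] at hv
          exact mem_erase.mpr ⟨hv, by simp [hD]⟩)]
      apply Finset.sum_congr rfl
      intro d hd
      have hdδ : d ≠ δ := (mem_erase.mp hd).1
      congr 1
      ext v
      simp only [mem_filter, mem_univ, true_and]
      constructor
      · rintro ⟨_, rfl⟩; rfl
      · rintro rfl; exact ⟨hdδ, rfl⟩
    have := hB v₀
    rw [hv₀] at this
    rw [← hfib]
    exact le_trans (le_of_eq rfl) this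
  -- lower bound on each class
  have hclass : ∀ d ∈ D.erase δ, n - 1 - d + 1 ≤ c d := by
    intro d hd
    have hd' : d ∈ D := mem_of_mem_erase hd
    obtain ⟨v, rfl⟩ := hmemD d hd'
    have h1 := hfact1 _ hd'
    have h2 := hdeg_lt v
    omega
  -- the image finset
  have hinj : ∀ d1 ∈ D.erase δ, ∀ d2 ∈ D.erase δ,
      n - 1 - d1 = n - 1 - d2 → d1 = d2 := by
    intro d1 h1 d2 h2 he
    obtain ⟨w1, rfl⟩ := hmemD d1 (mem_of_mem_erase h1)
    obtain ⟨w2, rfl⟩ := hmemD d2 (mem_of_mem_erase h2)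
    have := hdeg_lt w1
    have := hdeg_lt w2
    omega
  set T : Finset ℕ := (D.erase δ).image (fun d => n - 1 - d) with hT
  have hTcard : T.card = s - 1 := by
    rw [hT, Finset.card_image_of_injOn hinj, card_erase_of_mem hδD]
  have hTsum : ∑ t ∈ T, t = ∑ d ∈ D.erase δ, (n - 1 - d) :=
    Finset.sum_image hinj
  have hstep : (s - 1) + ∑ t ∈ T, t ≤ δ := by
    have : ∑ d ∈ D.erase δ, (n - 1 - d + 1) ≤ ∑ d ∈ D.erase δ, c d :=
      Finset.sum_le_sum hclass
    rw [Finset.sum_add_distrib, Finset.sum_const, card_erase_of_mem hδD,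
      smul_eq_mul, mul_one] at this
    rw [hTsum]
    omega
  have hTbound := two_mul_sum_ge T
  rw [hTcard] at hTbound
  -- key natural number inequality : s * (s - 1) ≤ 2 * δ
  have hkey : s * (s - 1) ≤ 2 * δ := by
    obtain ⟨t, hst⟩ : ∃ t, s = t + 1 := ⟨s - 1, by omega⟩
    rw [hst] at hstep hTbound ⊢
    simp only [Nat.add_sub_cancel] at hstep hTbound ⊢
    match t, hstep, hTbound with
    | 0, _, _ => omega
    | (k + 1), hstep, hTbound =>
      simp only [Nat.add_sub_cancel] at hTbound
      nlinarith [hstep, hTbound]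
  -- now the real analysis
  rw [hncard]
  have hsR : (1 : ℝ) ≤ (s : ℝ) := by exact_mod_cast hs1
  have hkeyR : (s : ℝ) * ((s : ℝ) - 1) ≤ 2 * (δ : ℝ) := by
    have : ((s * (s - 1) : ℕ) : ℝ) ≤ ((2 * δ : ℕ) : ℝ) := by exact_mod_cast hkey
    push_cast [Nat.cast_sub hs1] at this
    linarith
  have hsq : (2 * (s : ℝ) - 1) ≤ Real.sqrt (1 + 8 * (δ : ℝ)) := by
    rw [Real.le_sqrt' (by linarith)]
    nlinarith
  linarith
end

section
/- For any finite simple graph G on n vertices with maximum cut β, the irregular domination number satisfies γ_ir(G) ≥ n + (1 - √(1 + 8β))/2. -/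
open Finset

variable {V : Type*}

lemma aux_sum (T : Finset ℕ) (h : ∀ t ∈ T, 1 ≤ t) : T.card * (T.card + 1) ≤ 2 * ∑ t ∈ T, t := by
  induction T using Finset.strongInduction with
  | _ T ih =>
    rcases T.eq_empty_or_nonempty with rfl | hT
    · simp
    · have hM : T.max' hT ∈ T := T.max'_mem hT
      have hsub : T ⊆ Finset.Icc 1 (T.max' hT) :=
        fun t ht => Finset.mem_Icc.mpr ⟨h t ht, T.le_max' t ht⟩
      have hcard : T.card ≤ T.max' hT := by
        have := Finset.card_le_card hsub
        simpa [Nat.card_Icc] using this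
      have hih := ih (T.erase (T.max' hT)) (Finset.erase_ssubset hM)
        (fun t ht => h t (Finset.mem_of_mem_erase ht))
      have hce : (T.erase (T.max' hT)).card = T.card - 1 := Finset.card_erase_of_mem hM
      have hsum : ∑ t ∈ T, t = T.max' hT + ∑ t ∈ T.erase (T.max' hT), t :=
        (Finset.add_sum_erase T id hM).symm
      obtain ⟨b, hb⟩ : ∃ b, T.card = b + 1 :=
        ⟨T.card - 1, by have := Finset.card_pos.mpr hT; omega⟩
      rw [hb, hsum]
      rw [hce, hb] at hih
      simp only [Nat.add_sub_cancel] at hih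
      nlinarith [hcard, hb ▸ hcard]

theorem stmt14 [Fintype V] (G : SimpleGraph V) :
    (Fintype.card V : ℝ) + (1 - Real.sqrt (1 + 8 * (maxCut G : ℝ))) / 2 ≤
      (gammaIr G : ℝ) := by
  classical
  have hne : {k | ∃ D : Finset V, IsIrrDom G D ∧ D.card = k}.Nonempty :=
    ⟨(univ : Finset V).card, univ,
      ⟨fun v hv => absurd (mem_univ v) hv, fun u hu => absurd (mem_univ u) hu⟩, rfl⟩
  obtain ⟨D, hD, hcard⟩ := Nat.sInf_mem hne
  set f : V → ℕ := fun u => Nat.card {w | w ∈ D ∧ G.Adj u w} with hf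
  -- cut value
  set N : ℕ := Nat.card {p : V × V | p.1 ∈ ((↑D : Set V)ᶜ) ∧ p.2 ∉ ((↑D : Set V)ᶜ) ∧ G.Adj p.1 p.2} with hN
  -- N = sum of f over Dᶜ
  set F : Finset (V × V) := univ.filter (fun p => p.1 ∉ D ∧ p.2 ∈ D ∧ G.Adj p.1 p.2) with hF
  have hNF : N = F.card := by
    have hset : {p : V × V | p.1 ∈ ((↑D : Set V)ᶜ) ∧ p.2 ∉ ((↑D : Set V)ᶜ) ∧ G.Adj p.1 p.2}
        = ↑F := by
      ext p; simp [hF]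
    rw [hN, hset, Nat.card_coe_set_eq, Set.ncard_coe_finset]
  have hfiber : ∀ u ∈ Dᶜ, (F.filter fun p => p.1 = u).card = f u := by
    intro u hu
    have himg : F.filter (fun p => p.1 = u)
        = (univ.filter fun w => w ∈ D ∧ G.Adj u w).image (fun w => (u, w)) := by
      ext ⟨a, b⟩
      simp only [hF, Finset.mem_filter, Finset.mem_image, Finset.mem_univ, true_and]
      constructor
      · rintro ⟨⟨h1, h2, h3⟩, rfl⟩; exact ⟨b, ⟨h2, h3⟩, rfl⟩
      · rintro ⟨w, ⟨h2, h3⟩, heq⟩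
        obtain ⟨rfl, rfl⟩ := Prod.mk.injEq .. ▸ heq
        exact ⟨⟨by simpa using hu, h2, h3⟩, rfl⟩
    rw [himg, Finset.card_image_of_injective _ (fun a b hab => (Prod.mk.injEq ..▸ hab).2)]
    show _ = Nat.card {w | w ∈ D ∧ G.Adj u w}
    have : {w | w ∈ D ∧ G.Adj u w} = ↑(univ.filter fun w => w ∈ D ∧ G.Adj u w) := by
      ext w; simp
    rw [this, Nat.card_coe_set_eq, Set.ncard_coe_finset]
  have hsumN : N = ∑ u ∈ Dᶜ, f u := by
    rw [hNF, Finset.card_eq_sum_card_fiberwise (f := Prod.fst) (t := Dᶜ)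
      (fun p hp => by simp only [hF, Finset.mem_coe, Finset.mem_filter] at hp; simpa using hp.2.1)]
    exact Finset.sum_congr rfl hfiber
  -- f is injective on Dᶜ with values ≥ 1
  have hinj : Set.InjOn f ↑(Dᶜ) := by
    intro u hu v hv huv
    by_contra h
    exact hD.2 u (by simpa using hu) v (by simpa using hv) h huv
  have hpos : ∀ u ∈ Dᶜ, 1 ≤ f u := by
    intro u hu
    obtain ⟨w, hw, hadj⟩ := hD.1 u (by simpa using hu)
    have : ({w' | w' ∈ D ∧ G.Adj u w'} : Set V).Nonempty := ⟨w, hw, hadj⟩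
    have := Set.ncard_pos (Set.toFinite _) |>.mpr this
    show 1 ≤ Nat.card {w | w ∈ D ∧ G.Adj u w}
    rw [Nat.card_coe_set_eq]; omega
  -- sum lower bound
  set T : Finset ℕ := (Dᶜ).image f with hT
  have hTcard : T.card = (Dᶜ).card := Finset.card_image_of_injOn hinj
  have hTsum : ∑ t ∈ T, t = ∑ u ∈ Dᶜ, f u := Finset.sum_image (fun a ha b hb => hinj (by simpa using ha) (by simpa using hb))
  have hT1 : ∀ t ∈ T, 1 ≤ t := by
    intro t ht
    obtain ⟨u, hu, rfl⟩ := Finset.mem_image.mp ht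
    exact hpos u hu
  have key : (Dᶜ).card * ((Dᶜ).card + 1) ≤ 2 * N := by
    have := aux_sum T hT1
    rw [hTcard, hTsum, ← hsumN] at this
    exact this
  -- N ≤ maxCut
  have hNle : N ≤ maxCut G := by
    apply le_csSup
    · refine ⟨Fintype.card (V × V), ?_⟩
      rintro x ⟨A, rfl⟩
      rw [Nat.card_coe_set_eq]
      calc Set.ncard _ ≤ (Set.univ : Set (V × V)).ncard := Set.ncard_le_ncard (Set.subset_univ _)
        _ = Fintype.card (V × V) := by rw [Set.ncard_univ, Nat.card_eq_fintype_card]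
    · exact ⟨(↑D : Set V)ᶜ, hN⟩
  -- arithmetic
  have hg : gammaIr G = D.card := hcard.symm
  have hkn : gammaIr G ≤ Fintype.card V := hg ▸ Finset.card_le_univ D
  have hm : (Dᶜ).card = Fintype.card V - gammaIr G := by
    rw [Finset.card_compl, hg]
  set m : ℕ := (Dᶜ).card
  have hmb : m * (m + 1) ≤ 2 * maxCut G := le_trans key (by omega)
  have hmr : (m : ℝ) = Fintype.card V - gammaIr G := by
    rw [hm]; push_cast [Nat.cast_sub hkn]; ring
  have hsq : (2 * (m : ℝ) + 1) ≤ Real.sqrt (1 + 8 * (maxCut G : ℝ)) := by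
    rw [Real.le_sqrt (by positivity) (by positivity)]
    have : ((m * (m+1) : ℕ) : ℝ) ≤ ((2 * maxCut G : ℕ) : ℝ) := Nat.cast_le.mpr hmb
    push_cast at this
    nlinarith
  linarith
end

section
/- For a finite simple graph G on n vertices, γ_ir(G) = n - 1 if and only if G is isomorphic to a disjoint union of t ≥ 0 isolated vertices with either a star K_{1,r} (r ≥ 1) or a nonempty r-regular graph (r ≥ 1). -/
open Finset

variable {V : Type*}

attribute [local instance] Classical.propDecidable

lemma deg_eq [Fintype V] (G : SimpleGraph V) (v : V) : deg G v = G.degree v := by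
  rw [deg, SimpleGraph.degree]
  rw [show {w | G.Adj v w} = (G.neighborSet v) from rfl, Nat.card_coe_set_eq,
    Set.ncard_eq_toFinset_card']
  congr 1

lemma cnt_eq [Fintype V] (G : SimpleGraph V) (D : Finset V) (u : V) :
    Nat.card {w | w ∈ D ∧ G.Adj u w} = (D.filter (fun w => G.Adj u w)).card := by
  have h : {w | w ∈ D ∧ G.Adj u w} = ↑(D.filter (fun w => G.Adj u w)) := by
    ext x; simp
  rw [h, Nat.card_coe_set_eq, Set.ncard_coe_finset]

lemma deg_ne_zero_iff [Fintype V] (G : SimpleGraph V) (v : V) :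
    deg G v ≠ 0 ↔ ∃ w, G.Adj v w := by
  rw [deg_eq, ← SimpleGraph.degree_pos_iff_exists_adj]
  omega

lemma deg_le_one [Fintype V] (G : SimpleGraph V) (v x : V)
    (h : ∀ w, G.Adj v w → w = x) : deg G v ≤ 1 := by
  rw [deg_eq, SimpleGraph.degree]
  calc (G.neighborFinset v).card ≤ ({x} : Finset V).card := by
        apply Finset.card_le_card
        intro w hw
        simp only [SimpleGraph.mem_neighborFinset] at hw
        simp [h w hw]
    _ = 1 := Finset.card_singleton x

lemma deg_eq_one [Fintype V] (G : SimpleGraph V) (v x : V)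
    (h : ∀ w, G.Adj v w → w = x) (hadj : G.Adj v x) : deg G v = 1 := by
  have h1 := deg_le_one G v x h
  have h2 : deg G v ≠ 0 := (deg_ne_zero_iff G v).2 ⟨x, hadj⟩
  omega

lemma irrDom_card_ge [Fintype V] (G : SimpleGraph V) (D : Finset V) (hD : IsIrrDom G D)
    (hstruct : (∃ c : V, ∀ u v : V, G.Adj u v → u = c ∨ v = c) ∨
      (∃ r, ∀ v : V, deg G v ≠ 0 → deg G v = r)) :
    Fintype.card V - 1 ≤ D.card := by
  by_contra hlt
  push_neg at hlt
  have hcompl : 2 ≤ Dᶜ.card := by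
    rw [Finset.card_compl]
    have := Finset.card_le_univ D
    omega
  obtain ⟨u, hu, v, hv, huv⟩ := Finset.one_lt_card.mp hcompl
  obtain ⟨hdom, hdist⟩ := hD
  rcases hstruct with ⟨c, hc⟩ | ⟨r, hr⟩
  · -- star case
    have hcD : c ∈ D := by
      by_contra hcD
      obtain ⟨u', hu', huc⟩ : ∃ u', u' ∈ Dᶜ ∧ u' ≠ c := by
        rcases eq_or_ne u c with h | h
        · exact ⟨v, hv, by rw [← h]; exact huv.symm⟩
        · exact ⟨u, hu, h⟩
      obtain ⟨w, hwD, hadj⟩ := hdom u' (Finset.mem_compl.mp hu')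
      rcases hc u' w hadj with h | h
      · exact huc h
      · exact hcD (h ▸ hwD)
    have key : ∀ x ∈ Dᶜ, Nat.card {w | w ∈ D ∧ G.Adj x w} = 1 := by
      intro x hx
      have hxD := Finset.mem_compl.mp hx
      have hxc : x ≠ c := fun h => hxD (h ▸ hcD)
      obtain ⟨w, hwD, hadj⟩ := hdom x hxD
      have hwc : w = c := (hc x w hadj).resolve_left hxc
      have hxadj : G.Adj x c := hwc ▸ hadj
      have hset : {w | w ∈ D ∧ G.Adj x w} = {c} := by
        ext y
        simp only [Set.mem_setOf_eq, Set.mem_singleton_iff]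
        constructor
        · rintro ⟨hyD, hy⟩; exact (hc x y hy).resolve_left hxc
        · rintro rfl; exact ⟨hcD, hxadj⟩
      rw [hset, Nat.card_coe_set_eq, Set.ncard_singleton]
    exact hdist u (Finset.mem_compl.mp hu) v (Finset.mem_compl.mp hv) huv
      (by rw [key u hu, key v hv])
  · -- regular case
    set S := Dᶜ with hSdef
    set s := S.card with hsdef
    set dS : V → ℕ := fun x => (S.filter (fun w => G.Adj x w)).card with hdSdef
    have hdegS : ∀ x ∈ S, G.degree x = r := by
      intro x hx
      obtain ⟨w, hwD, hadj⟩ := hdom x (Finset.mem_compl.mp hx)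
      have := hr x ((deg_ne_zero_iff G x).2 ⟨w, hadj⟩)
      rw [deg_eq] at this
      exact this
    have hsplit : ∀ x : V, (D.filter (fun w => G.Adj x w)).card + dS x = G.degree x := by
      intro x
      rw [hdSdef]
      rw [← Finset.card_union_of_disjoint]
      · rw [← Finset.filter_union, Finset.union_compl]
        rw [SimpleGraph.degree, SimpleGraph.neighborFinset_eq_filter]
      · exact Finset.disjoint_filter_filter (disjoint_compl_right)
    have hinj : ∀ x ∈ S, ∀ y ∈ S, x ≠ y → dS x ≠ dS y := by
      intro x hx y hy hxy heq
      apply hdist x (Finset.mem_compl.mp hx) y (Finset.mem_compl.mp hy) hxy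
      rw [cnt_eq, cnt_eq]
      have h1 := hsplit x
      have h2 := hsplit y
      rw [hdegS x hx] at h1
      rw [hdegS y hy] at h2
      omega
    have hle : ∀ x ∈ S, dS x ≤ s - 1 := by
      intro x hx
      rw [hdSdef]
      calc (S.filter (fun w => G.Adj x w)).card ≤ (S.erase x).card := by
            apply Finset.card_le_card
            intro w hw
            simp only [Finset.mem_filter] at hw
            exact Finset.mem_erase.mpr ⟨fun h => G.irrefl (h ▸ hw.2), hw.1⟩
        _ = s - 1 := by rw [Finset.card_erase_of_mem hx]
    have himg : S.image dS = Finset.range s := by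
      apply Finset.eq_of_subset_of_card_le
      · intro k hk
        simp only [Finset.mem_image] at hk
        obtain ⟨x, hx, rfl⟩ := hk
        exact Finset.mem_range.mpr (by have := hle x hx; omega)
      · rw [Finset.card_range, Finset.card_image_of_injOn]
        intro x hx y hy h
        by_contra hxy
        exact hinj x hx y hy hxy h
    have hx1 : ∃ x ∈ S, dS x = s - 1 := by
      have : s - 1 ∈ S.image dS := by
        rw [himg]; exact Finset.mem_range.mpr (by omega)
      simpa using this
    have hy0 : ∃ y ∈ S, dS y = 0 := by
      have : 0 ∈ S.image dS := by
        rw [himg]; exact Finset.mem_range.mpr (by omega)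
      simpa using this
    obtain ⟨x, hx, hdx⟩ := hx1
    obtain ⟨y, hy, hdy⟩ := hy0
    have hxy : x ≠ y := by
      intro h; rw [h, hdy] at hdx; omega
    have hfe : S.filter (fun w => G.Adj x w) = S.erase x := by
      apply Finset.eq_of_subset_of_card_le
      · intro w hw
        simp only [Finset.mem_filter] at hw
        exact Finset.mem_erase.mpr ⟨fun h => G.irrefl (h ▸ hw.2), hw.1⟩
      · rw [Finset.card_erase_of_mem hx]
        exact le_of_eq hdx.symm
    have hyx : y ∈ S.erase x := Finset.mem_erase.mpr ⟨hxy.symm, hy⟩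
    rw [← hfe, Finset.mem_filter] at hyx
    have : x ∈ S.filter (fun w => G.Adj y w) := Finset.mem_filter.mpr ⟨hx, hyx.2.symm⟩
    have : dS y ≠ 0 := by
      rw [hdSdef]
      simp only [ne_eq, Finset.card_eq_zero]
      intro h
      rw [h] at this
      exact absurd this (Finset.notMem_empty x)
    exact this hdy

lemma filter_sdiff_pair [Fintype V] (G : SimpleGraph V) (a b : V) :
    (Finset.univ \ {a, b}).filter (fun w => G.Adj a w) = (G.neighborFinset a).erase b := by
  ext w
  simp only [Finset.mem_filter, Finset.mem_sdiff, Finset.mem_univ, true_and,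
    Finset.mem_insert, Finset.mem_singleton, Finset.mem_erase, SimpleGraph.mem_neighborFinset]
  constructor
  · rintro ⟨h, hadj⟩
    push_neg at h
    exact ⟨h.2, hadj⟩
  · rintro ⟨hb, hadj⟩
    refine ⟨?_, hadj⟩
    push_neg
    exact ⟨fun h => by subst h; exact G.irrefl hadj, hb⟩

lemma pair_cnt_ne [Fintype V] (G : SimpleGraph V) (u v : V)
    (hdeg : deg G u ≠ deg G v) :
    ((G.neighborFinset u).erase v).card ≠ ((G.neighborFinset v).erase u).card := by
  rw [deg_eq, deg_eq] at hdeg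
  by_cases h : G.Adj u v
  · have h1 : v ∈ G.neighborFinset u := (SimpleGraph.mem_neighborFinset G u v).mpr h
    have h2 : u ∈ G.neighborFinset v := (SimpleGraph.mem_neighborFinset G v u).mpr h.symm
    rw [Finset.card_erase_of_mem h1, Finset.card_erase_of_mem h2]
    have d1 : 1 ≤ G.degree u := Finset.card_pos.mpr ⟨v, h1⟩
    have d2 : 1 ≤ G.degree v := Finset.card_pos.mpr ⟨u, h2⟩
    simp only [SimpleGraph.degree] at *
    omega
  · have h1 : v ∉ G.neighborFinset u := fun hh =>
      h ((SimpleGraph.mem_neighborFinset G u v).mp hh)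
    have h2 : u ∉ G.neighborFinset v := fun hh =>
      h ((SimpleGraph.mem_neighborFinset G v u).mp hh).symm
    rw [Finset.erase_eq_of_notMem h1, Finset.erase_eq_of_notMem h2]
    exact hdeg

lemma pair_irrDom [Fintype V] (G : SimpleGraph V) (u v : V) (huv : u ≠ v)
    (hdeg : deg G u ≠ deg G v)
    (hu : ∃ w, G.Adj u w ∧ w ≠ v) (hv : ∃ w, G.Adj v w ∧ w ≠ u) :
    IsIrrDom G (Finset.univ \ {u, v}) ∧
      (Finset.univ \ {u, v}).card = Fintype.card V - 2 := by
  set D := Finset.univ \ ({u, v} : Finset V) with hDdef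
  have hmem : ∀ x : V, x ∈ D ↔ x ≠ u ∧ x ≠ v := by
    intro x; simp [hDdef]
  have hout : ∀ x : V, x ∉ D ↔ x = u ∨ x = v := by
    intro x
    rw [hmem]
    tauto
  have hcard : D.card = Fintype.card V - 2 := by
    rw [hDdef, Finset.card_sdiff_of_subset (Finset.subset_univ _), Finset.card_univ]
    congr 1
    rw [Finset.card_insert_of_notMem (by simp [huv]), Finset.card_singleton]
  have hcu : Nat.card {w | w ∈ D ∧ G.Adj u w} = ((G.neighborFinset u).erase v).card := by
    rw [cnt_eq, hDdef, filter_sdiff_pair]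
  have hcv : Nat.card {w | w ∈ D ∧ G.Adj v w} = ((G.neighborFinset v).erase u).card := by
    rw [cnt_eq, hDdef, Finset.pair_comm, filter_sdiff_pair]
  have hne := pair_cnt_ne G u v hdeg
  refine ⟨⟨?_, ?_⟩, hcard⟩
  · intro x hx
    rcases (hout x).mp hx with rfl | rfl
    · obtain ⟨w, hadj, hwv⟩ := hu
      exact ⟨w, (hmem w).mpr ⟨fun h => G.irrefl (h ▸ hadj), hwv⟩, hadj⟩
    · obtain ⟨w, hadj, hwu⟩ := hv
      exact ⟨w, (hmem w).mpr ⟨hwu, fun h => G.irrefl (h ▸ hadj)⟩, hadj⟩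
  · intro a ha b hb hab
    rcases (hout a).mp ha with rfl | rfl <;> rcases (hout b).mp hb with rfl | rfl
    · exact absurd rfl hab
    · rw [hcu, hcv]; exact hne
    · rw [hcu, hcv]; exact hne.symm
    · exact absurd rfl hab

lemma star_aux [Fintype V] (G : SimpleGraph V)
    (P : ∀ u v : V, u ≠ v → deg G u ≠ deg G v →
      (∀ w, G.Adj u w → w = v) ∨ (∀ w, G.Adj v w → w = u))
    (a b : V) (ha : deg G a ≠ 0) (hb : deg G b ≠ 0) (hab : deg G a ≠ deg G b)
    (hNa : ∀ w, G.Adj a w → w = b) :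
    1 ≤ deg G b ∧ ∀ u v : V, G.Adj u v → u = b ∨ v = b := by
  obtain ⟨w0, hw0⟩ := (deg_ne_zero_iff G a).1 ha
  have hadjab : G.Adj a b := (hNa w0 hw0) ▸ hw0
  have hda : deg G a = 1 := deg_eq_one G a b hNa hadjab
  have hdb2 : 2 ≤ deg G b := by omega
  refine ⟨by omega, ?_⟩
  intro x y hxy
  by_contra hcon
  push_neg at hcon
  obtain ⟨hxb, hyb⟩ := hcon
  have hdx : deg G x = 1 := by
    rcases eq_or_ne x a with rfl | hxa
    · exact hda
    · by_contra hdx1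
      rcases P x a hxa (by rw [hda]; exact hdx1) with h1 | h2
      · have hya : y = a := h1 y hxy
        subst hya
        exact hxb (hNa x hxy.symm)
      · exact hxb (h2 b hadjab).symm
  rcases P x b hxb (by rw [hdx]; omega) with h1 | h2
  · exact hyb (h1 y hxy)
  · have := deg_le_one G b x h2
    omega


theorem stmt16 [Fintype V] [Nonempty V] (G : SimpleGraph V) :
    gammaIr G = Fintype.card V - 1 ↔
      ∃ r : ℕ, 1 ≤ r ∧
        ((∃ c : V, deg G c = r ∧ ∀ u v : V, G.Adj u v → u = c ∨ v = c) ∨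
         ((∀ v : V, deg G v ≠ 0 → deg G v = r) ∧ ∃ v : V, deg G v = r)) := by
  classical
  have hn1 : 1 ≤ Fintype.card V := Fintype.card_pos
  have hUniv : IsIrrDom G (Finset.univ : Finset V) :=
    ⟨fun v hv => absurd (Finset.mem_univ v) hv,
     fun u hu => absurd (Finset.mem_univ u) hu⟩
  have hne : {k | ∃ D : Finset V, IsIrrDom G D ∧ D.card = k}.Nonempty :=
    ⟨Fintype.card V, Finset.univ, hUniv, Finset.card_univ⟩
  constructor
  · intro h
    have hmem : gammaIr G ∈ {k | ∃ D : Finset V, IsIrrDom G D ∧ D.card = k} :=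
      Nat.sInf_mem hne
    rw [h] at hmem
    obtain ⟨D0, hD0, hc0⟩ := hmem
    have hcompl0 : D0ᶜ.Nonempty := by
      rw [← Finset.card_pos, Finset.card_compl, hc0]; omega
    obtain ⟨v0, hv0⟩ := hcompl0
    obtain ⟨w0, hw0D, hw0⟩ := hD0.1 v0 (Finset.mem_compl.mp hv0)
    have P : ∀ u v : V, u ≠ v → deg G u ≠ deg G v →
        (∀ w, G.Adj u w → w = v) ∨ (∀ w, G.Adj v w → w = u) := by
      intro u v huv hdeg
      by_contra hcon
      push_neg at hcon
      obtain ⟨⟨wu, hwu, hwuv⟩, wv, hwv, hwvu⟩ := hcon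
      obtain ⟨hDp, hcardp⟩ := pair_irrDom G u v huv hdeg ⟨wu, hwu, hwuv⟩ ⟨wv, hwv, hwvu⟩
      have hle : gammaIr G ≤ Fintype.card V - 2 :=
        Nat.sInf_le ⟨_, hDp, hcardp⟩
      have hn2 : 2 ≤ Fintype.card V := Fintype.one_lt_card_iff_nontrivial.mpr ⟨u, v, huv⟩
      omega
    by_cases hreg : ∀ x y : V, deg G x ≠ 0 → deg G y ≠ 0 → deg G x = deg G y
    · have hw0ne : deg G w0 ≠ 0 := (deg_ne_zero_iff G w0).2 ⟨v0, hw0.symm⟩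
      refine ⟨deg G w0, by omega, Or.inr ⟨?_, w0, rfl⟩⟩
      intro x hx
      exact hreg x w0 hx hw0ne
    · push_neg at hreg
      obtain ⟨x, y, hx0, hy0, hxyd⟩ := hreg
      have hxy : x ≠ y := fun hh => hxyd (hh ▸ rfl)
      rcases P x y hxy hxyd with h1 | h2
      · obtain ⟨h1b, h2b⟩ := star_aux G P x y hx0 hy0 hxyd h1
        exact ⟨deg G y, h1b, Or.inl ⟨y, rfl, h2b⟩⟩
      · obtain ⟨h1b, h2b⟩ := star_aux G P y x hy0 hx0 hxyd.symm h2
        exact ⟨deg G x, h1b, Or.inl ⟨x, rfl, h2b⟩⟩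
  · rintro ⟨r, hr, hstruct⟩
    have hstruct' : (∃ c : V, ∀ u v : V, G.Adj u v → u = c ∨ v = c) ∨
        (∃ r', ∀ v : V, deg G v ≠ 0 → deg G v = r') := by
      rcases hstruct with ⟨c, _, hc⟩ | ⟨hregu, _⟩
      · exact Or.inl ⟨c, hc⟩
      · exact Or.inr ⟨r, hregu⟩
    obtain ⟨v0, hv0⟩ : ∃ v0 : V, deg G v0 = r := by
      rcases hstruct with ⟨c, hc, _⟩ | ⟨_, hv⟩
      · exact ⟨c, hc⟩
      · exact hv
    obtain ⟨w0, hw0⟩ := (deg_ne_zero_iff G v0).1 (by omega)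
    have hD : IsIrrDom G (Finset.univ.erase v0) := by
      constructor
      · intro x hx
        have hxv : x = v0 := by
          by_contra hcc
          exact hx (Finset.mem_erase.mpr ⟨hcc, Finset.mem_univ x⟩)
        subst hxv
        exact ⟨w0, Finset.mem_erase.mpr ⟨fun hh => G.irrefl (hh ▸ hw0),
          Finset.mem_univ w0⟩, hw0⟩
      · intro a ha b hb hab
        exfalso
        apply hab
        have ha' : a = v0 := by
          by_contra hcc; exact ha (Finset.mem_erase.mpr ⟨hcc, Finset.mem_univ a⟩)
        have hb' : b = v0 := by
          by_contra hcc; exact hb (Finset.mem_erase.mpr ⟨hcc, Finset.mem_univ b⟩)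
        rw [ha', hb']
    have hcardD : (Finset.univ.erase v0).card = Fintype.card V - 1 := by
      rw [Finset.card_erase_of_mem (Finset.mem_univ v0), Finset.card_univ]
    have hub : gammaIr G ≤ Fintype.card V - 1 := Nat.sInf_le ⟨_, hD, hcardD⟩
    have hmem : gammaIr G ∈ {k | ∃ D : Finset V, IsIrrDom G D ∧ D.card = k} :=
      Nat.sInf_mem hne
    obtain ⟨D1, hD1, hc1⟩ := hmem
    have hlb := irrDom_card_ge G D1 hD1 hstruct'
    omega
end

section
/- For any finite simple graph G on n vertices with minimum degree δ ≥ 1, α_ir(G) + γ_ir(G) ≤ n. -/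
open Finset

variable {V : Type*}

theorem stmt17 [Fintype V] (G : SimpleGraph V) (hδ : ∀ v : V, 1 ≤ deg G v) :
    alphaIr G + gammaIr G ≤ Fintype.card V := by
  classical
  have hbdd : BddAbove {k | ∃ A : Finset V, IsIrrIndep G A ∧ A.card = k} := by
    refine ⟨Fintype.card V, ?_⟩
    rintro k ⟨A, -, rfl⟩
    exact A.card_le_univ.trans_eq (by simp)
  have hne : {k | ∃ A : Finset V, IsIrrIndep G A ∧ A.card = k}.Nonempty :=
    ⟨0, ∅, ⟨by simp, by simp⟩, by simp⟩
  obtain ⟨A, hA, hAcard⟩ := Nat.sSup_mem hne hbdd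
  -- neighbors of a vertex of A are outside A
  have hnb : ∀ u ∈ A, ∀ w, G.Adj u w → w ∉ A := by
    intro u hu w hw hwA
    exact hA.1 u hu w hwA hw
  have hset : ∀ u ∈ A, {w | w ∈ Aᶜ ∧ G.Adj u w} = {w | G.Adj u w} := by
    intro u hu
    ext w
    simp only [Set.mem_setOf_eq, Finset.mem_compl]
    exact ⟨fun h => h.2, fun h => ⟨hnb u hu w h, h⟩⟩
  have hdom : IsIrrDom G Aᶜ := by
    constructor
    · intro v hv
      rw [Finset.mem_compl, not_not] at hv
      have h1 : 1 ≤ Nat.card {w | G.Adj v w} := hδ v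
      have : Nat.card {w | G.Adj v w} ≠ 0 := by omega
      rw [Nat.card_ne_zero] at this
      obtain ⟨⟨w, hw⟩, -⟩ := this
      exact ⟨w, Finset.mem_compl.mpr (hnb v hv w hw), hw⟩
    · intro u hu v hv huv
      rw [Finset.mem_compl, not_not] at hu hv
      rw [hset u hu, hset v hv]
      exact hA.2 u hu v hv huv
  have hγ : gammaIr G ≤ (Aᶜ : Finset V).card :=
    Nat.sInf_le ⟨Aᶜ, hdom, rfl⟩
  have : alphaIr G = A.card := hAcard.symm
  rw [this]
  have := Finset.card_compl_add_card A
  omega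
end
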